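/- Let T be a tree on a finite set I, fix a nice total order identifying V(T) with {1, …, n} where n = |I| − 1, and let ⊥ denote the singleton partition. The lattice Ad(T) satisfies the level condition: if a_0, a_1, …, a_k are atoms of Ad(T) with λ(⊥, a_0) < λ(⊥, a_1) < ⋯ < λ(⊥, a_k), then a_0 ≰ a_1 ∨ a_2 ∨ ⋯ ∨ a_k. -/

import Mathlib

open Finset

/-- A rooted binary tree with leaves labeled in `α`. -/
inductive BTree (α : Type) : Type where
  | leaf : α → BTree α
  | node : BTree α → BTree α → BTree α

namespace BTree

variable {α : Type} [DecidableEq α]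

/-- The list of leaf labels of the tree. -/
def leafList : BTree α → List α
  | .leaf a => [a]
  | .node l r => l.leafList ++ r.leafList

/-- The set of leaf labels of the tree. -/
def leaves (t : BTree α) : Finset α := t.leafList.toFinset

/-- `t` is a tree on the finite set `I`: its leaves are labeled bijectively by `I`. -/
def IsTreeOn (t : BTree α) (I : Finset α) : Prop :=
  t.leafList.Nodup ∧ t.leaves = I

/-- The set `V(t)` of internal vertices of the tree, each internal vertex being
represented by the set of its ancestor leaves (the leaf labels of the subtree
rooted there).  In this representation a vertex `v` is below a vertex `w` in the
ancestor order (i.e. `w` lies on the path from `v` to the root) exactly when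
`v ⊆ w`. -/
def vertexSet : BTree α → Finset (Finset α)
  | .leaf _ => ∅
  | .node l r => insert (l.leaves ∪ r.leaves) (l.vertexSet ∪ r.vertexSet)

/-- The list of internal vertices of the tree, recorded as the pairs
(left subtree, right subtree) hanging at each internal vertex. -/
def nodes : BTree α → List (BTree α × BTree α)
  | .leaf _ => []
  | .node l r => (l, r) :: (l.nodes ++ r.nodes)

/-- `meetVertex t i j` is the internal vertex `v_{(i,j)}` at which the paths from the
leaves labeled `i` and `j` towards the root first meet (as the set of its ancestor
leaves); meaningful when `i ≠ j` are both leaf labels of `t`. -/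
def meetVertex : BTree α → α → α → Finset α
  | .leaf a, _, _ => {a}
  | .node l r, i, j =>
    if i ∈ l.leaves ∧ j ∈ l.leaves then l.meetVertex i j
    else if i ∈ r.leaves ∧ j ∈ r.leaves then r.meetVertex i j
    else l.leaves ∪ r.leaves

/-- `S(J) = { v_{(i,j)} : i, j ∈ J, i ≠ j }`. -/
def S (t : BTree α) (J : Finset α) : Finset (Finset α) :=
  ((J ×ˢ J).filter fun p => p.1 ≠ p.2).image fun p => t.meetVertex p.1 p.2

/-- A partition `π` of `I` is `T`-admissible when `S(B) ∩ S(B') = ∅` for every pair of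
distinct blocks `B, B'` of `π`. -/
def Admissible (t : BTree α) {I : Finset α} (π : Finpartition I) : Prop :=
  ∀ B ∈ π.parts, ∀ C ∈ π.parts, B ≠ C → t.S B ∩ t.S C = ∅

/-- A nice total order on the internal vertices of `T`, encoded by an integer-valued
ranking function: it is injective on `V(T)` and is a linear extension of the ancestor
order (a vertex `v` is below `w`, i.e. `w` is on the path from `v` to the root, iff
`v ⊆ w` in the ancestor-leaves representation). -/
def IsNiceOrder (t : BTree α) (ord : Finset α → ℕ) : Prop :=
  Set.InjOn ord ↑t.vertexSet ∧
    ∀ v ∈ t.vertexSet, ∀ w ∈ t.vertexSet, v ⊆ w → ord v ≤ ord w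

/-- A nice total order identifying `V(T)` with `{1, …, n}`. -/
def IsNiceLabeling (t : BTree α) (n : ℕ) (ord : Finset α → ℕ) : Prop :=
  t.IsNiceOrder ord ∧ t.vertexSet.image ord = Finset.Icc 1 n

end BTree

/-- The poset `Ad(T)` of `T`-admissible partitions of `I`, ordered by refinement
(the order is inherited from the refinement order on `Finpartition I`). -/
def AdPartition {α : Type} [DecidableEq α] (T : BTree α) (I : Finset α) : Type :=
  {π : Finpartition I // T.Admissible π}

namespace AdPartition

variable {α : Type} [DecidableEq α] {T : BTree α} {I : Finset α}

instance : PartialOrder (AdPartition T I) := Subtype.partialOrder _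

/-- The set `V(π)` of internal vertices of a partition: the union of the `S(B)` over
the blocks `B` of `π`. -/
def verts (T : BTree α) {I : Finset α} (π : Finpartition I) : Finset (Finset α) :=
  π.parts.sup fun B => T.S B

/-- The edge label `λ(π, τ)` of a covering relation `π ⋖ τ` in `Ad(T)`: the unique
internal vertex `v` with `V(τ) = V(π) ∪ {v}` (extracted here as the union of the
finset `V(τ) \ V(π)`, which is the singleton `{v}` when `π ⋖ τ`). -/
def label (T : BTree α) {I : Finset α} (π τ : AdPartition T I) : Finset α :=
  (verts T τ.1 \ verts T π.1).sup id

/-- The label sequence, with respect to a nice order `ord`, of a saturated chain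
recorded as a list of consecutive elements. -/
def labelSeq (T : BTree α) {I : Finset α} (ord : Finset α → ℕ)
    (c : List (AdPartition T I)) : List ℕ :=
  (c.zip c.tail).map fun p => ord (label T p.1 p.2)

/-- The atom of `Ad(T)` whose unique doubleton block is `{p, q}`, all other blocks
being singletons. -/
def IsAtomPart (T : BTree α) (I : Finset α) (a : AdPartition T I) (p q : α) : Prop :=
  p ≠ q ∧ a.1.parts = insert {p, q} ((I \ {p, q}).image fun x => ({x} : Finset α))

end AdPartition

section LatticeGen

variable {P : Type*} [PartialOrder P]

/-- A subset of a partial order closed under existing pairwise joins and meets. -/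
def IsLatClosed (D : Set P) : Prop :=
  (∀ x ∈ D, ∀ y ∈ D, ∀ z, IsLUB {x, y} z → z ∈ D) ∧
    (∀ x ∈ D, ∀ y ∈ D, ∀ z, IsGLB {x, y} z → z ∈ D)

/-- The sublattice generated by a subset of a partial order: the smallest subset
containing it that is closed under pairwise joins and meets. -/
def latticeGen (s : Set P) : Set P :=
  ⋂₀ {D : Set P | s ⊆ D ∧ IsLatClosed D}

/-- The subset `D`, with the induced join and meet, is a distributive lattice:
`x ∧ (y ∨ z) = (x ∧ y) ∨ (x ∧ z)` for all `x, y, z ∈ D`. -/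
def IsDistribSet (D : Set P) : Prop :=
  ∀ x ∈ D, ∀ y ∈ D, ∀ z ∈ D,
    ∀ yz, IsLUB {y, z} yz → ∀ w, IsGLB {x, yz} w →
      ∀ xy, IsGLB {x, y} xy → ∀ xz, IsGLB {x, z} xz →
        ∀ u, IsLUB {xy, xz} u → w = u

end LatticeGen


namespace BTree

variable {α : Type} [DecidableEq α]

lemma leaves_node (l r : BTree α) : (BTree.node l r).leaves = l.leaves ∪ r.leaves := by
  simp [leaves, leafList]

lemma leaves_nonempty (t : BTree α) : t.leaves.Nonempty := by
  induction t with
  | leaf a => exact ⟨a, by simp [leaves, leafList]⟩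
  | node l r ihl ihr => rw [leaves_node]; exact ihl.mono Finset.subset_union_left

lemma nodup_parts {l r : BTree α} (h : (BTree.node l r).leafList.Nodup) :
    l.leafList.Nodup ∧ r.leafList.Nodup ∧ Disjoint l.leaves r.leaves := by
  rw [leafList, List.nodup_append] at h
  refine ⟨h.1, h.2.1, ?_⟩
  rw [leaves, leaves, List.disjoint_toFinset_iff_disjoint]
  intro a ha hb
  exact h.2.2 a ha a hb rfl

lemma mem_meetVertex (t : BTree α) (i j : α) (hi : i ∈ t.leaves) : i ∈ t.meetVertex i j := by
  induction t with
  | leaf a =>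
    simp only [leaves, leafList, List.toFinset_cons, List.toFinset_nil] at hi
    simpa [meetVertex] using hi
  | node l r ihl ihr =>
    rw [meetVertex]
    split_ifs with h1 h2
    · exact ihl h1.1
    · exact ihr h2.1
    · rw [leaves_node] at hi; exact hi

lemma meetVertex_subset (t : BTree α) (i j : α) : t.meetVertex i j ⊆ t.leaves := by
  induction t with
  | leaf a => simp [meetVertex, leaves, leafList]
  | node l r ihl ihr =>
    rw [meetVertex, leaves_node]
    split_ifs
    · exact ihl.trans Finset.subset_union_left
    · exact ihr.trans Finset.subset_union_right
    · exact subset_rfl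

lemma meet_ll {l r : BTree α} {i j : α} (hi : i ∈ l.leaves) (hj : j ∈ l.leaves) :
    (BTree.node l r).meetVertex i j = l.meetVertex i j := by
  rw [meetVertex, if_pos ⟨hi, hj⟩]

lemma meet_rr {l r : BTree α} (hd : Disjoint l.leaves r.leaves) {i j : α}
    (hi : i ∈ r.leaves) (hj : j ∈ r.leaves) :
    (BTree.node l r).meetVertex i j = r.meetVertex i j := by
  rw [meetVertex, if_neg (fun h => Finset.disjoint_right.1 hd hi h.1), if_pos ⟨hi, hj⟩]

lemma meet_lr {l r : BTree α} (hd : Disjoint l.leaves r.leaves) {i j : α}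
    (hi : i ∈ l.leaves) (hj : j ∈ r.leaves) :
    (BTree.node l r).meetVertex i j = l.leaves ∪ r.leaves := by
  rw [meetVertex, if_neg (fun h => Finset.disjoint_right.1 hd hj h.2),
    if_neg (fun h => Finset.disjoint_left.1 hd hi h.1)]

lemma meet_rl {l r : BTree α} (hd : Disjoint l.leaves r.leaves) {i j : α}
    (hi : i ∈ r.leaves) (hj : j ∈ l.leaves) :
    (BTree.node l r).meetVertex i j = l.leaves ∪ r.leaves := by
  rw [meetVertex, if_neg (fun h => Finset.disjoint_right.1 hd hi h.1),
    if_neg (fun h => Finset.disjoint_left.1 hd hj h.2)]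

-- helper inequalities
lemma ne_of_sides {s t : Finset α} (hd : Disjoint s t) {m1 m2 : Finset α}
    (h1 : m1 ⊆ s) (h2 : m2 ⊆ t) {i : α} (hi : i ∈ m1) : m1 ≠ m2 := by
  intro h
  exact Finset.disjoint_left.1 hd (h1 hi) (h2 (h ▸ hi))

lemma ne_union_of_left {s t : Finset α} (hd : Disjoint s t) {m1 : Finset α}
    (h1 : m1 ⊆ s) (ht : t.Nonempty) : m1 ≠ s ∪ t := by
  intro h
  obtain ⟨y, hy⟩ := ht
  exact Finset.disjoint_left.1 hd (h1 (h ▸ Finset.mem_union_right s hy)) hy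

end BTree

lemma abstract_step {α : Type} [DecidableEq α] {ι : Type}
    (U W : Finset α) (hd : Disjoint U W) (hWne : W.Nonempty)
    (mU mW Mf : α → α → Finset α)
    (hmUsub : ∀ i j, mU i j ⊆ U) (hmUmem : ∀ i j, i ∈ U → i ∈ mU i j)
    (hmWsub : ∀ i j, mW i j ⊆ W) (hmWmem : ∀ i j, i ∈ W → i ∈ mW i j)
    (hll : ∀ i j, i ∈ U → j ∈ U → Mf i j = mU i j)
    (hrr : ∀ i j, i ∈ W → j ∈ W → Mf i j = mW i j)
    (hlr : ∀ i j, i ∈ U → j ∈ W → Mf i j = U ∪ W)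
    (hrl : ∀ i j, i ∈ W → j ∈ U → Mf i j = U ∪ W)
    (P Q : ι → α) (p0 q0 : α) (hq0U : q0 ∈ U)
    (hPm : ∀ s, P s ∈ U ∪ W) (hQm : ∀ s, Q s ∈ U ∪ W)
    (hinj : ∀ s s', Mf (P s) (Q s) = Mf (P s') (Q s') → s = s')
    (A : Finset α) (hA : A ⊆ U) (hp0A : p0 ∈ A) (hq0A : q0 ∉ A)
    (hiff : ∀ s, P s ∈ U → Q s ∈ U → (P s ∈ A ↔ Q s ∈ A))
    (hadm : ∀ i ∈ A, ∀ j ∈ A, ∀ i' ∈ U, ∀ j' ∈ U, i' ∉ A → j' ∉ A →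
      i ≠ j → i' ≠ j' → mU i j ≠ mU i' j') :
    ∃ B : Finset α, B ⊆ U ∪ W ∧ p0 ∈ B ∧ q0 ∉ B ∧
      (∀ s, (P s ∈ B ↔ Q s ∈ B)) ∧
      (∀ i ∈ B, ∀ j ∈ B, ∀ i' ∈ U ∪ W, ∀ j' ∈ U ∪ W, i' ∉ B → j' ∉ B →
        i ≠ j → i' ≠ j' → Mf i j ≠ Mf i' j') := by
  classical
  -- the admissibility part, for both possible extensions
  have hadmB : ∀ X : Finset α, (X = ∅ ∨ X = W) →
      ∀ i ∈ A ∪ X, ∀ j ∈ A ∪ X, ∀ i' ∈ U ∪ W, ∀ j' ∈ U ∪ W, i' ∉ A ∪ X → j' ∉ A ∪ X →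
        i ≠ j → i' ≠ j' → Mf i j ≠ Mf i' j' := by
    intro X hX i hi j hj i' hi' j' hj' hni' hnj' hij hij'
    have hXW : ∀ x ∈ X, X = W := fun x hx =>
      hX.resolve_left (fun h => by rw [h] at hx; exact absurd hx (Finset.notMem_empty x))
    have hC1 : (i ∈ A ∧ j ∈ A ∧ Mf i j = mU i j) ∨ (X = W ∧ Mf i j = U ∪ W) ∨
        (X = W ∧ i ∈ W ∧ Mf i j = mW i j) := by
      rcases Finset.mem_union.1 hi with hiA | hiX <;> rcases Finset.mem_union.1 hj with hjA | hjX
      · exact Or.inl ⟨hiA, hjA, hll _ _ (hA hiA) (hA hjA)⟩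
      · have hXw := hXW _ hjX
        exact Or.inr (Or.inl ⟨hXw, hlr _ _ (hA hiA) (hXw ▸ hjX)⟩)
      · have hXw := hXW _ hiX
        exact Or.inr (Or.inl ⟨hXw, hrl _ _ (hXw ▸ hiX) (hA hjA)⟩)
      · have hXw := hXW _ hiX
        exact Or.inr (Or.inr ⟨hXw, hXw ▸ hiX, hrr _ _ (hXw ▸ hiX) (hXw ▸ hjX)⟩)
    have hC2 : (i' ∈ U ∧ j' ∈ U ∧ Mf i' j' = mU i' j') ∨
        (∃ y, y ∈ W ∧ y ∉ X ∧ y ∈ Mf i' j') := by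
      rcases Finset.mem_union.1 hi' with h1 | h1 <;> rcases Finset.mem_union.1 hj' with h2 | h2
      · exact Or.inl ⟨h1, h2, hll _ _ h1 h2⟩
      · refine Or.inr ⟨j', h2, fun hx => hnj' (Finset.mem_union_right _ hx), ?_⟩
        rw [hlr _ _ h1 h2]; exact Finset.mem_union_right _ h2
      · refine Or.inr ⟨i', h1, fun hx => hni' (Finset.mem_union_right _ hx), ?_⟩
        rw [hrl _ _ h1 h2]; exact Finset.mem_union_right _ h1
      · refine Or.inr ⟨i', h1, fun hx => hni' (Finset.mem_union_right _ hx), ?_⟩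
        rw [hrr _ _ h1 h2]; exact hmWmem _ _ h1
    rcases hC1 with ⟨hiA, hjA, hMij⟩ | ⟨hXw, hMij⟩ | ⟨hXw, hiW, hMij⟩ <;>
        rcases hC2 with ⟨h1, h2, hM'⟩ | ⟨y, hyW, hyX, hyM⟩
    · rw [hMij, hM']
      exact hadm i hiA j hjA i' h1 j' h2 (fun h => hni' (Finset.mem_union_left _ h))
        (fun h => hnj' (Finset.mem_union_left _ h)) hij hij'
    · intro heq
      have : y ∈ mU i j := by rw [← hMij, heq]; exact hyM
      exact Finset.disjoint_left.1 hd (hmUsub i j this) hyW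
    · intro heq
      obtain ⟨w, hw⟩ := hWne
      have : w ∈ mU i' j' := by
        rw [← hM', ← heq, hMij]; exact Finset.mem_union_right _ hw
      exact Finset.disjoint_left.1 hd (hmUsub i' j' this) hw
    · exact absurd hyW (hXw ▸ hyX)
    · intro heq
      have hi1 : i ∈ mW i j := hmWmem _ _ hiW
      have : i ∈ mU i' j' := by rw [← hM', ← heq, hMij]; exact hi1
      exact Finset.disjoint_left.1 hd (hmUsub i' j' this) hiW
    · exact absurd hyW (hXw ▸ hyX)
  by_cases hex : ∃ s, (P s ∈ A ∧ Q s ∈ W) ∨ (Q s ∈ A ∧ P s ∈ W)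
  · -- attach W on the side of A
    have key1 : ∀ s, P s ∈ U → Q s ∈ W → P s ∈ A := by
      intro s hPU hQW
      obtain ⟨s', hs'⟩ := hex
      have hMs : Mf (P s) (Q s) = U ∪ W := hlr _ _ hPU hQW
      have hMs' : Mf (P s') (Q s') = U ∪ W := by
        rcases hs' with ⟨h1, h2⟩ | ⟨h1, h2⟩
        · exact hlr _ _ (hA h1) h2
        · exact hrl _ _ h2 (hA h1)
      have hss : s = s' := hinj s s' (hMs.trans hMs'.symm)
      subst hss
      rcases hs' with ⟨h1, _⟩ | ⟨_, h2⟩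
      · exact h1
      · exact absurd hPU (Finset.disjoint_right.1 hd h2)
    have key2 : ∀ s, P s ∈ W → Q s ∈ U → Q s ∈ A := by
      intro s hPW hQU
      obtain ⟨s', hs'⟩ := hex
      have hMs : Mf (P s) (Q s) = U ∪ W := hrl _ _ hPW hQU
      have hMs' : Mf (P s') (Q s') = U ∪ W := by
        rcases hs' with ⟨h1, h2⟩ | ⟨h1, h2⟩
        · exact hlr _ _ (hA h1) h2
        · exact hrl _ _ h2 (hA h1)
      have hss : s = s' := hinj s s' (hMs.trans hMs'.symm)
      subst hss
      rcases hs' with ⟨_, h2⟩ | ⟨h1, _⟩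
      · exact absurd hQU (Finset.disjoint_right.1 hd h2)
      · exact h1
    refine ⟨A ∪ W, Finset.union_subset_union hA subset_rfl, Finset.mem_union_left _ hp0A,
      ?_, ?_, hadmB W (Or.inr rfl)⟩
    · intro h
      rcases Finset.mem_union.1 h with h | h
      · exact hq0A h
      · exact Finset.disjoint_left.1 hd hq0U h
    · intro s
      have hP := hPm s; have hQ := hQm s
      rcases Finset.mem_union.1 hP with hPU | hPW <;> rcases Finset.mem_union.1 hQ with hQU | hQW
      · constructor
        · intro h
          rcases Finset.mem_union.1 h with h | h
          · exact Finset.mem_union_left _ ((hiff s hPU hQU).1 h)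
          · exact absurd h (Finset.disjoint_left.1 hd hPU)
        · intro h
          rcases Finset.mem_union.1 h with h | h
          · exact Finset.mem_union_left _ ((hiff s hPU hQU).2 h)
          · exact absurd h (Finset.disjoint_left.1 hd hQU)
      · exact iff_of_true (Finset.mem_union_left _ (key1 s hPU hQW)) (Finset.mem_union_right _ hQW)
      · exact iff_of_true (Finset.mem_union_right _ hPW) (Finset.mem_union_left _ (key2 s hPW hQU))
      · exact iff_of_true (Finset.mem_union_right _ hPW) (Finset.mem_union_right _ hQW)
  · -- keep A as is
    refine ⟨A, hA.trans Finset.subset_union_left, hp0A, hq0A, ?_, ?_⟩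
    · intro s
      have hP := hPm s; have hQ := hQm s
      rcases Finset.mem_union.1 hP with hPU | hPW <;> rcases Finset.mem_union.1 hQ with hQU | hQW
      · exact hiff s hPU hQU
      · exact iff_of_false (fun h => hex ⟨s, Or.inl ⟨h, hQW⟩⟩)
          (fun h => Finset.disjoint_left.1 hd (hA h) hQW)
      · exact iff_of_false (fun h => Finset.disjoint_left.1 hd (hA h) hPW)
          (fun h => hex ⟨s, Or.inr ⟨h, hPW⟩⟩)
      · exact iff_of_false (fun h => Finset.disjoint_left.1 hd (hA h) hPW)
          (fun h => Finset.disjoint_left.1 hd (hA h) hQW)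
    · have := hadmB ∅ (Or.inl rfl)
      rwa [Finset.union_empty] at this

lemma main_sep {α : Type} [DecidableEq α] (t : BTree α) :
    ∀ {ι : Type} (P Q : ι → α) (p0 q0 : α),
      t.leafList.Nodup → p0 ∈ t.leaves → q0 ∈ t.leaves → p0 ≠ q0 →
      (∀ s, P s ∈ t.leaves) → (∀ s, Q s ∈ t.leaves) →
      (∀ s, t.meetVertex (P s) (Q s) ≠ t.meetVertex p0 q0) →
      (∀ s s', t.meetVertex (P s) (Q s) = t.meetVertex (P s') (Q s') → s = s') →
      ∃ A : Finset α, A ⊆ t.leaves ∧ p0 ∈ A ∧ q0 ∉ A ∧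
        (∀ s, (P s ∈ A ↔ Q s ∈ A)) ∧
        (∀ i ∈ A, ∀ j ∈ A, ∀ i' ∈ t.leaves, ∀ j' ∈ t.leaves, i' ∉ A → j' ∉ A →
          i ≠ j → i' ≠ j' → t.meetVertex i j ≠ t.meetVertex i' j') := by
  induction t with
  | leaf a =>
    intro ι P Q p0 q0 _ hp0 hq0 hpq0 _ _ _ _
    simp [BTree.leaves, BTree.leafList] at hp0 hq0
    exact absurd (hp0.trans hq0.symm) hpq0
  | node l r ihl ihr =>
    intro ι P Q p0 q0 hnd hp0 hq0 hpq0 hPm hQm hm0 hinj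
    obtain ⟨hndl, hndr, hd⟩ := BTree.nodup_parts hnd
    have hPm' : ∀ s, P s ∈ l.leaves ∪ r.leaves := fun s => BTree.leaves_node l r ▸ hPm s
    have hQm' : ∀ s, Q s ∈ l.leaves ∪ r.leaves := fun s => BTree.leaves_node l r ▸ hQm s
    rw [BTree.leaves_node] at hp0 hq0
    rcases Finset.mem_union.1 hp0 with hp0l | hp0r <;>
      rcases Finset.mem_union.1 hq0 with hq0l | hq0r
    · -- p0, q0 ∈ l.leaves
      obtain ⟨A, hAsub, hp0A, hq0A, hiffA, hadmA⟩ :=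
        ihl (ι := {s : ι // P s ∈ l.leaves ∧ Q s ∈ l.leaves})
          (fun s => P s.1) (fun s => Q s.1) p0 q0 hndl hp0l hq0l hpq0
          (fun s => s.2.1) (fun s => s.2.2)
          (fun s => by
            have := hm0 s.1
            rwa [BTree.meet_ll s.2.1 s.2.2, BTree.meet_ll hp0l hq0l] at this)
          (fun s s' h => Subtype.ext (hinj s.1 s'.1 (by
            rwa [BTree.meet_ll s.2.1 s.2.2, BTree.meet_ll s'.2.1 s'.2.2])))
      obtain ⟨B, hBsub, hp0B, hq0B, hiffB, hadmB⟩ :=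
        abstract_step l.leaves r.leaves hd (BTree.leaves_nonempty r)
          l.meetVertex r.meetVertex (BTree.node l r).meetVertex
          (fun i j => BTree.meetVertex_subset l i j) (fun i j hi => BTree.mem_meetVertex l i j hi)
          (fun i j => BTree.meetVertex_subset r i j) (fun i j hi => BTree.mem_meetVertex r i j hi)
          (fun i j hi hj => BTree.meet_ll hi hj) (fun i j hi hj => BTree.meet_rr hd hi hj)
          (fun i j hi hj => BTree.meet_lr hd hi hj) (fun i j hi hj => BTree.meet_rl hd hi hj)
          P Q p0 q0 hq0l hPm' hQm' hinj A hAsub hp0A hq0A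
          (fun s h1 h2 => hiffA ⟨s, h1, h2⟩) hadmA
      refine ⟨B, ?_, hp0B, hq0B, hiffB, ?_⟩
      · rw [BTree.leaves_node]; exact hBsub
      · intro i hi j hj i' hi' j' hj'
        rw [BTree.leaves_node] at hi' hj'
        exact hadmB i hi j hj i' hi' j' hj'
    · -- p0 ∈ l.leaves, q0 ∈ r.leaves : no split edges, take A = l.leaves
      refine ⟨l.leaves, by rw [BTree.leaves_node]; exact Finset.subset_union_left, hp0l,
        Finset.disjoint_right.1 hd hq0r, ?_, ?_⟩
      · intro s
        have hP := hPm' s; have hQ := hQm' s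
        constructor
        · intro hPl
          by_contra hQl
          have hQr : Q s ∈ r.leaves := (Finset.mem_union.1 hQ).resolve_left hQl
          exact hm0 s (by rw [BTree.meet_lr hd hPl hQr, BTree.meet_lr hd hp0l hq0r])
        · intro hQl
          by_contra hPl
          have hPr : P s ∈ r.leaves := (Finset.mem_union.1 hP).resolve_left hPl
          exact hm0 s (by rw [BTree.meet_rl hd hPr hQl, BTree.meet_lr hd hp0l hq0r])
      · intro i hi j hj i' hi' j' hj' hni' hnj' hij hij'
        rw [BTree.leaves_node] at hi' hj'
        have hi'r : i' ∈ r.leaves := (Finset.mem_union.1 hi').resolve_left hni'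
        have hj'r : j' ∈ r.leaves := (Finset.mem_union.1 hj').resolve_left hnj'
        rw [BTree.meet_ll hi hj, BTree.meet_rr hd hi'r hj'r]
        exact BTree.ne_of_sides hd (BTree.meetVertex_subset l i j)
          (BTree.meetVertex_subset r i' j') (BTree.mem_meetVertex l i j hi)
    · -- p0 ∈ r.leaves, q0 ∈ l.leaves : A = r.leaves
      refine ⟨r.leaves, by rw [BTree.leaves_node]; exact Finset.subset_union_right, hp0r,
        Finset.disjoint_left.1 hd hq0l, ?_, ?_⟩
      · intro s
        have hP := hPm' s; have hQ := hQm' s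
        constructor
        · intro hPr
          by_contra hQr
          have hQl : Q s ∈ l.leaves := (Finset.mem_union.1 hQ).resolve_right hQr
          exact hm0 s (by rw [BTree.meet_rl hd hPr hQl, BTree.meet_rl hd hp0r hq0l])
        · intro hQr
          by_contra hPr
          have hPl : P s ∈ l.leaves := (Finset.mem_union.1 hP).resolve_right hPr
          exact hm0 s (by rw [BTree.meet_lr hd hPl hQr, BTree.meet_rl hd hp0r hq0l])
      · intro i hi j hj i' hi' j' hj' hni' hnj' hij hij'
        rw [BTree.leaves_node] at hi' hj'
        have hi'l : i' ∈ l.leaves := (Finset.mem_union.1 hi').resolve_right hni'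
        have hj'l : j' ∈ l.leaves := (Finset.mem_union.1 hj').resolve_right hnj'
        rw [BTree.meet_rr hd hi hj, BTree.meet_ll hi'l hj'l]
        exact BTree.ne_of_sides hd.symm (BTree.meetVertex_subset r i j)
          (BTree.meetVertex_subset l i' j') (BTree.mem_meetVertex r i j hi)
    · -- p0, q0 ∈ r.leaves
      obtain ⟨A, hAsub, hp0A, hq0A, hiffA, hadmA⟩ :=
        ihr (ι := {s : ι // P s ∈ r.leaves ∧ Q s ∈ r.leaves})
          (fun s => P s.1) (fun s => Q s.1) p0 q0 hndr hp0r hq0r hpq0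
          (fun s => s.2.1) (fun s => s.2.2)
          (fun s => by
            have := hm0 s.1
            rwa [BTree.meet_rr hd s.2.1 s.2.2, BTree.meet_rr hd hp0r hq0r] at this)
          (fun s s' h => Subtype.ext (hinj s.1 s'.1 (by
            rwa [BTree.meet_rr hd s.2.1 s.2.2, BTree.meet_rr hd s'.2.1 s'.2.2])))
      have hPm'' : ∀ s, P s ∈ r.leaves ∪ l.leaves := fun s => by
        rw [Finset.union_comm]; exact hPm' s
      have hQm'' : ∀ s, Q s ∈ r.leaves ∪ l.leaves := fun s => by
        rw [Finset.union_comm]; exact hQm' s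
      obtain ⟨B, hBsub, hp0B, hq0B, hiffB, hadmB⟩ :=
        abstract_step r.leaves l.leaves hd.symm (BTree.leaves_nonempty l)
          r.meetVertex l.meetVertex (BTree.node l r).meetVertex
          (fun i j => BTree.meetVertex_subset r i j) (fun i j hi => BTree.mem_meetVertex r i j hi)
          (fun i j => BTree.meetVertex_subset l i j) (fun i j hi => BTree.mem_meetVertex l i j hi)
          (fun i j hi hj => BTree.meet_rr hd hi hj) (fun i j hi hj => BTree.meet_ll hi hj)
          (fun i j hi hj => (BTree.meet_rl hd hi hj).trans (Finset.union_comm _ _))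
          (fun i j hi hj => (BTree.meet_lr hd hi hj).trans (Finset.union_comm _ _))
          P Q p0 q0 hq0r hPm'' hQm'' hinj A hAsub hp0A hq0A
          (fun s h1 h2 => hiffA ⟨s, h1, h2⟩) hadmA
      refine ⟨B, ?_, hp0B, hq0B, hiffB, ?_⟩
      · rw [BTree.leaves_node, Finset.union_comm]; exact hBsub
      · intro i hi j hj i' hi' j' hj'
        rw [BTree.leaves_node, Finset.union_comm] at hi' hj'
        exact hadmB i hi j hj i' hi' j' hj'

/-- `Ad(T)` satisfies the level condition: if `a_0, a_1, …, a_k` are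
atoms with strictly increasing labels `λ(⊥, a_0) < λ(⊥, a_1) < ⋯ < λ(⊥, a_k)` (in a
nice labeling of `V(T)` by `{1, …, n}`), then `a_0 ≰ a_1 ∨ a_2 ∨ ⋯ ∨ a_k`. -/
theorem stmt14 {α : Type} [DecidableEq α] (I : Finset α) (T : BTree α)
    (hT : T.IsTreeOn I) (n : ℕ) (hn : I.card = n + 1)
    (ord : Finset α → ℕ) (hord : T.IsNiceLabeling n ord)
    (k : ℕ) (a : Fin (k + 1) → AdPartition T I) (p q : Fin (k + 1) → α)
    (ha : ∀ r, AdPartition.IsAtomPart T I (a r) (p r) (q r))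
    (hmono : StrictMono fun r : Fin (k + 1) => ord (T.meetVertex (p r) (q r))) :
    ∀ s : AdPartition T I,
      IsLUB {x : AdPartition T I | ∃ r : Fin (k + 1), r ≠ 0 ∧ a r = x} s →
        ¬ a 0 ≤ s := by
  intro s hlub hle
  classical
  have hI : T.leaves = I := hT.2
  have hmem : ∀ r : Fin (k + 1), p r ∈ I ∧ q r ∈ I ∧ p r ≠ q r := by
    intro r
    obtain ⟨hne, hparts⟩ := ha r
    have hpq : ({p r, q r} : Finset α) ∈ (a r).1.parts := by
      rw [hparts]; exact Finset.mem_insert_self _ _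
    have hsub : ({p r, q r} : Finset α) ⊆ I := (a r).1.le hpq
    exact ⟨hsub (by simp), hsub (by simp), hne⟩
  have hMinj : ∀ r r' : Fin (k + 1),
      T.meetVertex (p r) (q r) = T.meetVertex (p r') (q r') → r = r' :=
    fun r r' h => hmono.injective (congrArg ord h)
  obtain ⟨A, hAsub, hp0A, hq0A, hiffA, hadmA⟩ :=
    main_sep T (ι := {r : Fin (k + 1) // r ≠ 0}) (fun s => p s.1) (fun s => q s.1) (p 0) (q 0)
      hT.1 (by rw [hI]; exact (hmem 0).1) (by rw [hI]; exact (hmem 0).2.1) (hmem 0).2.2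
      (fun s => by rw [hI]; exact (hmem s.1).1) (fun s => by rw [hI]; exact (hmem s.1).2.1)
      (fun s h => s.2 (hMinj s.1 0 h))
      (fun s s' h => Subtype.ext (hMinj s.1 s'.1 h))
  have hAI : A ⊆ I := by rw [← hI]; exact hAsub
  have hq0I : q 0 ∈ I := (hmem 0).2.1
  have hANe : A ≠ I \ A := by
    intro h
    exact (Finset.mem_sdiff.1 (h ▸ hp0A)).2 hp0A
  have hexists : ∃ tp : AdPartition T I, tp.1.parts = {A, I \ A} := by
    refine ⟨⟨⟨{A, I \ A}, ?_, ?_, ?_⟩, ?_⟩, rfl⟩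
    · rw [Finset.supIndep_pair hANe]
      exact Finset.disjoint_sdiff
    · rw [Finset.sup_insert, Finset.sup_singleton]
      show A ⊔ (I \ A) = I
      exact Finset.union_sdiff_of_subset hAI
    · simp only [Finset.bot_eq_empty, Finset.mem_insert, Finset.mem_singleton]
      push_neg
      constructor
      · intro h; rw [← h] at hp0A; exact absurd hp0A (Finset.notMem_empty _)
      · intro h
        have hq : q 0 ∈ I \ A := Finset.mem_sdiff.2 ⟨hq0I, hq0A⟩
        rw [← h] at hq; exact absurd hq (Finset.notMem_empty _)
    · -- admissibility
      have hS : ∀ v, v ∈ T.S A → v ∈ T.S (I \ A) → False := by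
        intro v hv1 hv2
        obtain ⟨⟨i, j⟩, hij, hv1⟩ := Finset.mem_image.1 hv1
        obtain ⟨⟨i', j'⟩, hij', hv2⟩ := Finset.mem_image.1 hv2
        rw [Finset.mem_filter, Finset.mem_product] at hij hij'
        have h1 := Finset.mem_sdiff.1 hij'.1.1
        have h2 := Finset.mem_sdiff.1 hij'.1.2
        exact hadmA i hij.1.1 j hij.1.2 i' (by rw [hI]; exact h1.1) j' (by rw [hI]; exact h2.1)
          h1.2 h2.2 hij.2 hij'.2 (hv1.trans hv2.symm)
      intro B hB C hC hBC
      rw [Finset.eq_empty_iff_forall_notMem]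
      intro v hv
      rw [Finset.mem_inter] at hv
      rcases Finset.mem_insert.1 hB with rfl | hB <;> rcases Finset.mem_insert.1 hC with rfl | hC
      · exact hBC rfl
      · rw [Finset.mem_singleton.1 hC] at hv
        exact hS v hv.1 hv.2
      · rw [Finset.mem_singleton.1 hB] at hv
        exact hS v hv.2 hv.1
      · rw [Finset.mem_singleton.1 hB, Finset.mem_singleton.1 hC] at hBC
        exact hBC rfl
  obtain ⟨tp, htp⟩ := hexists
  have hub : tp ∈ upperBounds {x : AdPartition T I | ∃ r : Fin (k + 1), r ≠ 0 ∧ a r = x} := by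
    rintro x ⟨r, hr0, rfl⟩
    show (a r).1 ≤ tp.1
    intro b hb
    rw [(ha r).2] at hb
    rw [htp]
    rcases Finset.mem_insert.1 hb with rfl | hb
    · have hiff := hiffA ⟨r, hr0⟩
      by_cases hpA : p r ∈ A
      · exact ⟨A, Finset.mem_insert_self _ _,
          Finset.insert_subset_iff.2 ⟨hpA, Finset.singleton_subset_iff.2 (hiff.1 hpA)⟩⟩
      · have hqA : q r ∉ A := fun h => hpA (hiff.2 h)
        refine ⟨I \ A, by simp, Finset.insert_subset_iff.2
          ⟨Finset.mem_sdiff.2 ⟨(hmem r).1, hpA⟩,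
           Finset.singleton_subset_iff.2 (Finset.mem_sdiff.2 ⟨(hmem r).2.1, hqA⟩)⟩⟩
    · obtain ⟨x, hx, rfl⟩ := Finset.mem_image.1 hb
      have hxI : x ∈ I := (Finset.mem_sdiff.1 hx).1
      by_cases hxA : x ∈ A
      · exact ⟨A, Finset.mem_insert_self _ _, Finset.singleton_subset_iff.2 hxA⟩
      · exact ⟨I \ A, by simp, Finset.singleton_subset_iff.2 (Finset.mem_sdiff.2 ⟨hxI, hxA⟩)⟩
  have hst : s ≤ tp := hlub.2 hub
  have h0 : (a 0).1 ≤ tp.1 := le_trans hle hst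
  have hb0 : ({p 0, q 0} : Finset α) ∈ (a 0).1.parts := by
    rw [(ha 0).2]; exact Finset.mem_insert_self _ _
  obtain ⟨c, hc, hsub⟩ := h0 hb0
  rw [htp] at hc
  rcases Finset.mem_insert.1 hc with rfl | hc
  · exact hq0A (hsub (by simp))
  · rw [Finset.mem_singleton.1 hc] at hsub
    exact (Finset.mem_sdiff.1 (hsub (by simp))).2 hp0A
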